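/- arXiv:2112.04872 — 2 statements merged into one kernel-verified Lean document; each statement's English description precedes it below -/
import Mathlib

section
/- For every full rook placement S on a Young diagram with n rows all of whose blocks have size at most 2, there is a unique left-aligned rook placement R on the double staircase 2δ_n with Π_n(R) = S. -/
/-- Rook placements on the double staircase `2δ_n`: one rook per row (row `i`,
numbered from the top starting at `0`, has `2*(i+1)` cells), at most one rook
per column. -/
def RookPlacement (n : ℕ) :=
  {r : Fin n → Fin (2 * n) //
    Function.Injective r ∧ ∀ i : Fin n, (r i : ℕ) < 2 * (i.val + 1)}

/-- Column `c` (0-indexed) of the rook placement `R` contains a rook. -/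
def Occupied {n : ℕ} (R : RookPlacement n) (c : ℕ) : Prop :=
  ∃ j : Fin n, (R.1 j : ℕ) = c

/-- The number of rooks in block `i` of `R` (block `i` consists of the two
columns `2i` and `2i+1`, 0-indexed). -/
def blockRooks {n : ℕ} (R : RookPlacement n) (i : Fin n) : ℕ :=
  (Finset.univ.filter (fun j : Fin n => (R.1 j : ℕ) / 2 = i.val)).card

/-- `R` is left-aligned: no block has a rook in its right column without a rook
in its left column. -/
def LeftAligned {n : ℕ} (R : RookPlacement n) : Prop :=
  ∀ i : Fin n, Occupied R (2 * i.val + 1) → Occupied R (2 * i.val)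

/-- `R` is right-aligned: no block has a rook in its left column without a rook
in its right column. -/
def RightAligned {n : ℕ} (R : RookPlacement n) : Prop :=
  ∀ i : Fin n, Occupied R (2 * i.val) → Occupied R (2 * i.val + 1)

/-- `bor R` is the number of blocks of `R` containing exactly one rook. -/
def bor {n : ℕ} (R : RookPlacement n) : ℕ :=
  (Finset.univ.filter (fun i : Fin n => blockRooks R i = 1)).card

/-- A full rook placement on a Young diagram with `n` rows fitting in an
`n × n` box (drawn in French notation).  `p.1 i` is the length of row `i`
(rows numbered from the top, so `p.1` is monotone) and `p.2 i` is the
(0-indexed) column of the rook of row `i`; there is exactly one rook in each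
row and in each column (`p.2` is a bijection). -/
abbrev FullPlacement (n : ℕ) :=
  {p : (Fin n → Fin (n + 1)) × (Fin n → Fin n) //
    (∀ i j : Fin n, i ≤ j → p.1 i ≤ p.1 j) ∧ Function.Bijective p.2 ∧
      ∀ i : Fin n, (p.2 i : ℕ) < (p.1 i : ℕ)}

/-- The height of column `c` of the Young diagram underlying `S`. -/
def colHeight {n : ℕ} (S : FullPlacement n) (c : Fin n) : ℕ :=
  (Finset.univ.filter (fun i : Fin n => (c : ℕ) < (S.1.1 i : ℕ))).card

/-- The size of the block (maximal set of columns of equal height) containing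
column `c`. -/
def blockSize {n : ℕ} (S : FullPlacement n) (c : Fin n) : ℕ :=
  (Finset.univ.filter (fun c' : Fin n => colHeight S c' = colHeight S c)).card

/-- `bso S` is the number of blocks of size `1` of `S`. -/
def bso {n : ℕ} (S : FullPlacement n) : ℕ :=
  (Finset.univ.filter (fun c : Fin n => blockSize S c = 1)).card

attribute [local instance] Classical.propDecidable

/-- `Projects R S` says that `S` is obtained from the rook placement `R` on the
double staircase `2δ_n` by deleting all empty columns (the projection `Π_n`):
the length of row `i` of `S` is the number of occupied columns of `R` among the
`2(i+1)` columns of row `i`, and the column of the rook of row `i` in `S` is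
the number of occupied columns of `R` strictly to the left of the rook of row
`i` of `R`. -/
def Projects {n : ℕ} (R : RookPlacement n) (S : FullPlacement n) : Prop :=
  (∀ i : Fin n, (S.1.1 i : ℕ) =
      (Finset.univ.filter
        (fun c : Fin (2 * n) => Occupied R (c : ℕ) ∧ (c : ℕ) < 2 * (i.val + 1))).card) ∧
  (∀ i : Fin n, (S.1.2 i : ℕ) =
      (Finset.univ.filter
        (fun c : Fin (2 * n) => Occupied R (c : ℕ) ∧ (c : ℕ) < (R.1 i : ℕ))).card)

/-!
Under `Π_n`, block `k` of `2δ_n` (columns `2k` and `2k + 1`) keeps exactly `λ_k - λ_{k-1}` of its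
columns, where `λ_k` is the length of row `k` of `S` and `λ_{-1} = 0`; this is at most `2` because a
jump of `3` in the row lengths would create a block of size `3` in `S`. Left alignment then
determines the set of occupied columns. The rook of row `i` must sit in the occupied column with
exactly `σ(i)` occupied columns to its left, `σ(i)` being the column of the rook of row `i` of `S`,
and putting it there does give a left-aligned placement in the fibre.
-/

open Finset

namespace Nat

variable {p : ℕ → Prop} [DecidablePred p]

theorem count_nth_of_lt_count {k m : ℕ} (h : k < count p m) : count p (nth p k) = k :=
  count_nth fun hf => h.trans_le (count_le_card hf m)

theorem nth_mem_of_lt_count {k m : ℕ} (h : k < count p m) : p (nth p k) :=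
  nth_mem k fun hf => h.trans_le (count_le_card hf m)

theorem card_filter_fin_and_lt {N m : ℕ} (hm : m ≤ N) :
    #{c : Fin N | p c ∧ (c : ℕ) < m} = count p m := by
  rw [count_eq_card_filter_range, ← card_map Fin.valEmbedding]
  congr 1
  ext c
  simp only [mem_map, mem_filter, mem_univ, true_and, Fin.valEmbedding_apply, mem_range]
  constructor
  · rintro ⟨c, ⟨hp, hc⟩, rfl⟩
    exact ⟨hc, hp⟩
  · rintro ⟨hc, hp⟩
    exact ⟨⟨c, by omega⟩, ⟨hp, hc⟩, rfl⟩

theorem apply_two_mul_add_iff_count {k e : ℕ} (he : e < 2) (hleft : p (2 * k + 1) → p (2 * k)) :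
    p (2 * k + e) ↔ count p (2 * k) + e < count p (2 * (k + 1)) := by
  rw [show 2 * (k + 1) = 2 * k + 1 + 1 by ring, count_succ, count_succ]
  interval_cases e <;> split_ifs <;> simp_all

end Nat

namespace FullPlacement

variable {n : ℕ} (S : FullPlacement n)

/-- `S.rowLength (i + 1)` is the length of row `i`; the value is `0` above the diagram and `n`
below it. -/
def rowLength : ℕ → ℕ
  | 0 => 0
  | k + 1 => if h : k < n then S.1.1 ⟨k, h⟩ else n

theorem rowLength_succ (i : Fin n) : S.rowLength (i + 1) = S.1.1 i :=
  dif_pos i.isLt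

theorem rowLength_le (k : ℕ) : S.rowLength k ≤ n := by
  rcases k with _ | k
  · exact n.zero_le
  · simp only [rowLength]
    split
    · exact Nat.lt_succ_iff.mp (S.1.1 _).isLt
    · exact le_rfl

theorem rowLength_monotone : Monotone S.rowLength := by
  refine monotone_nat_of_le_succ fun k => ?_
  rcases k with _ | k
  · exact Nat.zero_le _
  · by_cases hk : k + 1 < n
    · rw [rowLength_succ S ⟨k, by omega⟩, rowLength_succ S ⟨k + 1, hk⟩]
      exact S.2.1 _ _ (Fin.mk_le_mk.mpr k.le_succ)
    · simp only [rowLength, dif_neg hk]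
      exact rowLength_le S (k + 1)

/-- The rook in column `n - 1` lies in a row of length `n`. -/
theorem rowLength_of_le {k : ℕ} (hk : n ≤ k) : S.rowLength k = n := by
  refine le_antisymm (rowLength_le S k) ?_
  rcases Nat.eq_zero_or_pos n with rfl | hn
  · exact Nat.zero_le _
  obtain ⟨i, hi⟩ := S.2.2.1.2 ⟨n - 1, by omega⟩
  have hrook : n - 1 < (S.1.1 i : ℕ) := by simpa [hi] using S.2.2.2 i
  have hmono := rowLength_monotone S (show i.val + 1 ≤ k by omega)
  rw [rowLength_succ] at hmono
  omega

theorem colHeight_eq {k : ℕ} {c : Fin n} (hk : S.rowLength k ≤ c)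
    (hk' : c < S.rowLength (k + 1)) :
    colHeight S c = #{i : Fin n | k ≤ i} := by
  unfold colHeight
  congr 1
  ext i
  simp only [mem_filter, mem_univ, true_and, ← rowLength_succ]
  constructor
  · intro hc
    by_contra! hik
    have := rowLength_monotone S (show i.val + 1 ≤ k by omega)
    omega
  · intro hik
    have := rowLength_monotone S (show k + 1 ≤ i.val + 1 by omega)
    omega

/-- Otherwise the columns `m, m + 1, m + 2` with `m = S.rowLength k` all have height `n - k`, so
they lie in one block. -/
theorem rowLength_succ_le (hS : ∀ c : Fin n, blockSize S c ≤ 2) (k : ℕ) :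
    S.rowLength (k + 1) ≤ S.rowLength k + 2 := by
  by_contra! hgap
  have hn := rowLength_le S (k + 1)
  have hsub : Icc (⟨S.rowLength k, by omega⟩ : Fin n) ⟨S.rowLength k + 2, by omega⟩ ⊆
      ({c | colHeight S c = colHeight S ⟨S.rowLength k, by omega⟩} : Finset (Fin n)) := by
    intro c hc
    simp only [mem_Icc, Fin.le_iff_val_le_val] at hc
    simp only [mem_filter, mem_univ, true_and]
    rw [colHeight_eq S hc.1 (by omega), colHeight_eq S le_rfl (by dsimp only; omega)]
  have hcard := card_le_card hsub
  rw [Fin.card_Icc] at hcard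
  dsimp only at hcard
  have := hS ⟨S.rowLength k, by omega⟩
  unfold blockSize at this
  omega

/-- The occupied columns of the left-aligned placement in the fibre of `S`: block `k` holds
`S.rowLength (k + 1) - S.rowLength k` occupied columns, flushed left. -/
def alignedCols (c : ℕ) : Prop :=
  S.rowLength (c / 2) + c % 2 < S.rowLength (c / 2 + 1)

theorem alignedCols_two_mul_add_iff {k e : ℕ} (he : e < 2) :
    S.alignedCols (2 * k + e) ↔ S.rowLength k + e < S.rowLength (k + 1) := by
  unfold alignedCols
  rw [show (2 * k + e) / 2 = k by omega, show (2 * k + e) % 2 = e by omega]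

theorem lt_of_alignedCols {c : ℕ} (hc : S.alignedCols c) : c < 2 * n := by
  by_contra! h
  unfold alignedCols at hc
  rw [rowLength_of_le S (by omega : n ≤ c / 2), rowLength_of_le S (by omega : n ≤ c / 2 + 1)]
    at hc
  omega

theorem count_alignedCols_two_mul [DecidablePred S.alignedCols]
    (hS : ∀ c : Fin n, blockSize S c ≤ 2) (k : ℕ) :
    Nat.count S.alignedCols (2 * k) = S.rowLength k := by
  induction k with
  | zero => simp [rowLength]
  | succ k ih =>
    have h0 := alignedCols_two_mul_add_iff S (k := k) (e := 0) (by omega)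
    have h1 := alignedCols_two_mul_add_iff S (k := k) (e := 1) (by omega)
    have hmono := rowLength_monotone S k.le_succ
    have hstep := rowLength_succ_le S hS k
    rw [show 2 * (k + 1) = 2 * k + 0 + 1 + 1 by ring, Nat.count_succ, Nat.count_succ]
    split_ifs <;> simp_all <;> omega

theorem rook_lt_count_alignedCols (hS : ∀ c : Fin n, blockSize S c ≤ 2) (i : Fin n) :
    (S.1.2 i : ℕ) < Nat.count S.alignedCols (2 * (i + 1)) := by
  rw [count_alignedCols_two_mul S hS, rowLength_succ]
  exact S.2.2.2 i

/-- The rook of row `i` goes to the occupied column of rank `S.1.2 i`. -/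
noncomputable def alignedPlacement (hS : ∀ c : Fin n, blockSize S c ≤ 2) : RookPlacement n :=
  ⟨fun i => ⟨Nat.nth S.alignedCols (S.1.2 i),
      (Nat.nth_lt_of_lt_count (rook_lt_count_alignedCols S hS i)).trans_le (by omega)⟩,
    fun i j hij => S.2.2.1.1 <| Fin.ext <| by
      rw [← Nat.count_nth_of_lt_count (rook_lt_count_alignedCols S hS i),
        ← Nat.count_nth_of_lt_count (rook_lt_count_alignedCols S hS j)]
      exact congrArg (Nat.count _ ∘ Fin.val) hij,
    fun i => Nat.nth_lt_of_lt_count (rook_lt_count_alignedCols S hS i)⟩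

theorem occupied_alignedPlacement_iff (hS : ∀ c : Fin n, blockSize S c ≤ 2) (c : ℕ) :
    Occupied (S.alignedPlacement hS) c ↔ S.alignedCols c := by
  constructor
  · rintro ⟨i, rfl⟩
    exact Nat.nth_mem_of_lt_count (rook_lt_count_alignedCols S hS i)
  · intro hc
    have hlt : Nat.count S.alignedCols c < n := by
      calc Nat.count S.alignedCols c < Nat.count S.alignedCols (2 * n) :=
            Nat.count_strict_mono hc (S.lt_of_alignedCols hc)
        _ = n := by rw [count_alignedCols_two_mul S hS, rowLength_of_le S le_rfl]
    obtain ⟨i, hi⟩ := S.2.2.1.2 ⟨_, hlt⟩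
    exact ⟨i, by simp [alignedPlacement, hi, Nat.nth_count hc]⟩

theorem leftAligned_alignedPlacement (hS : ∀ c : Fin n, blockSize S c ≤ 2) :
    LeftAligned (S.alignedPlacement hS) := by
  intro k
  have h0 := alignedCols_two_mul_add_iff S (k := k) two_pos
  have h1 := alignedCols_two_mul_add_iff S (k := k) one_lt_two
  rw [add_zero] at h0
  rw [occupied_alignedPlacement_iff, occupied_alignedPlacement_iff, h0, h1]
  omega

theorem projects_alignedPlacement (hS : ∀ c : Fin n, blockSize S c ≤ 2) :
    Projects (S.alignedPlacement hS) S := by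
  have hocc : Occupied (S.alignedPlacement hS) = S.alignedCols :=
    funext fun c => propext (occupied_alignedPlacement_iff S hS c)
  refine ⟨fun i => ?_, fun i => ?_⟩
  · rw [Nat.card_filter_fin_and_lt (by omega), hocc, count_alignedCols_two_mul S hS,
      rowLength_succ]
  · rw [Nat.card_filter_fin_and_lt (Fin.isLt _).le, hocc]
    exact (Nat.count_nth_of_lt_count (rook_lt_count_alignedCols S hS i)).symm

end FullPlacement

namespace RookPlacement

variable {n : ℕ}

theorem lt_of_occupied {R : RookPlacement n} {c : ℕ} (hc : Occupied R c) : c < 2 * n := by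
  obtain ⟨j, rfl⟩ := hc
  exact (R.1 j).isLt

theorem count_occupied_two_mul {R : RookPlacement n} {S : FullPlacement n} (hP : Projects R S)
    {k : ℕ} (hk : k ≤ n) : Nat.count (Occupied R) (2 * k) = S.rowLength k := by
  rcases k with _ | k
  · rfl
  · rw [← Nat.card_filter_fin_and_lt (N := 2 * n) (by omega), ← hP.1 ⟨k, hk⟩]
    exact (S.rowLength_succ ⟨k, hk⟩).symm

theorem count_occupied_apply {R : RookPlacement n} {S : FullPlacement n} (hP : Projects R S)
    (i : Fin n) : Nat.count (Occupied R) (R.1 i) = S.1.2 i := by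
  rw [← Nat.card_filter_fin_and_lt (R.1 i).isLt.le, hP.2 i]

theorem occupied_iff_alignedCols {R : RookPlacement n} {S : FullPlacement n}
    (hR : LeftAligned R) (hP : Projects R S) (c : ℕ) :
    Occupied R c ↔ S.alignedCols c := by
  by_cases hc : c < 2 * n
  · obtain ⟨k, e, he, rfl⟩ : ∃ k e, e < 2 ∧ 2 * k + e = c := ⟨c / 2, c % 2, by omega, by omega⟩
    rw [Nat.apply_two_mul_add_iff_count he (hR ⟨k, by omega⟩), S.alignedCols_two_mul_add_iff he,
      count_occupied_two_mul hP (by omega), count_occupied_two_mul hP (by omega)]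
  · exact iff_of_false (fun h => hc (lt_of_occupied h)) (fun h => hc (S.lt_of_alignedCols h))

theorem apply_eq_nth_alignedCols {R : RookPlacement n} {S : FullPlacement n}
    (hR : LeftAligned R) (hP : Projects R S) (i : Fin n) :
    (R.1 i : ℕ) = Nat.nth S.alignedCols (S.1.2 i) := by
  have hocc : Occupied R = S.alignedCols :=
    funext fun c => propext (occupied_iff_alignedCols hR hP c)
  rw [← count_occupied_apply hP i, ← hocc, Nat.nth_count ⟨i, rfl⟩]

end RookPlacement

/-- For every full rook placement `S` on a Young diagram with `n` rows all of
whose blocks have size at most `2`, there is a unique left-aligned rook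
placement `R` on the double staircase `2δ_n` projecting to `S`. -/
theorem unique_left_aligned_in_fiber (n : ℕ) (S : FullPlacement n)
    (hS : ∀ c : Fin n, blockSize S c ≤ 2) :
    ∃! R : RookPlacement n, LeftAligned R ∧ Projects R S :=
  ⟨S.alignedPlacement hS, ⟨S.leftAligned_alignedPlacement hS, S.projects_alignedPlacement hS⟩,
    fun _ ⟨hR, hP⟩ => Subtype.ext <| funext fun i =>
      Fin.ext (RookPlacement.apply_eq_nth_alignedCols hR hP i)⟩
end

section
/- For any k ≥ 1, the map sending a rook placement R on the k-tuple staircase kδ_n to the labeled tree with root 1 and, for 1 ≤ j ≤ k, vertex v+1 as the j-th child of vertex u whenever the j-th column of the u-th block of R has a rook in row v, is a bijection between rook placements on kδ_n (one rook per row, at most one per column) and increasing k-ary trees on n+1 vertices; in particular the number of such rook placements is the number of increasing k-ary trees on n+1 vertices. -/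
/-- Rook placements on the `k`-tuple staircase `kδ_n` (the Young diagram
`(kn, k(n-1), …, k)` in French notation): one rook per row (row `i`, numbered
from the top starting at `0`, has `k*(i+1)` cells), at most one rook per
column.  Block `u` (0-indexed) consists of the columns `ku, …, ku+k-1`. -/
def RookPlacementK (k n : ℕ) :=
  {r : Fin n → Fin (k * n) //
    Function.Injective r ∧ ∀ i : Fin n, (r i : ℕ) < k * (i.val + 1)}

/-- Increasing `k`-ary trees on `n+1` vertices `0, …, n` (vertex `i` carries
label `i+1`): each vertex has, for each `j : Fin k`, at most one `j`-th child,
children have larger labels than their parent, and every non-root vertex has a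
unique parent. -/
def IncKTree (k n : ℕ) :=
  {c : Fin (n + 1) → Fin k → Option (Fin (n + 1)) //
    (∀ u j v, c u j = some v → u < v) ∧
    (∀ v : Fin (n + 1), v ≠ 0 → ∃! p : Fin (n + 1) × Fin k, c p.1 p.2 = some v)}

/-!
An increasing `k`-ary tree on the vertices `0, …, n` is determined by its parent map, which sends
vertex `i + 1` to the slot `(u, j)` it occupies, "the `j`-th child of `u`", with `u ≤ i`; it is
injective because a slot holds at most one child, and any such injective map comes from a tree.
A column `c` of `kδ_n` encodes the slot `(u, j)` with `c = k * u + j`: the staircase condition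
`c < k * (i + 1)` on row `i` is `u ≤ i`, and distinct columns are distinct slots.
-/

open Function

theorem div_mod_eq_iff_eq_mul_add {c k u j : ℕ} (hj : j < k) :
    c / k = u ∧ c % k = j ↔ c = k * u + j := by
  rw [Nat.div_mod_unique (by omega)]
  omega

theorem mul_add_inj {k u u' j j' : ℕ} (hj : j < k) (hj' : j' < k) :
    k * u + j = k * u' + j' ↔ u = u' ∧ j = j' := by
  refine ⟨fun h => ?_, fun ⟨hu, hj⟩ => hu ▸ hj ▸ rfl⟩
  obtain ⟨hu, hj⟩ := (div_mod_eq_iff_eq_mul_add hj).2 rfl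
  obtain ⟨hu', hj'⟩ := (div_mod_eq_iff_eq_mul_add hj').2 h
  exact ⟨hu.symm.trans hu', hj.symm.trans hj'⟩

theorem mul_add_lt_mul {k u j m : ℕ} (hj : j < k) (hu : u < m) : k * u + j < k * m :=
  calc k * u + j < k * (u + 1) := by rw [mul_add_one]; omega
    _ ≤ k * m := Nat.mul_le_mul_left k hu

/-- Vertex `i.succ` is the `(p i).2`-th child of `(p i).1`. -/
def IncParentMap (k n : ℕ) :=
  {p : Fin n → Fin (n + 1) × Fin k // Injective p ∧ ∀ i, (p i).1 < i.succ}

variable {k n : ℕ}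

namespace IncKTree

theorem existsUnique_parent (T : IncKTree k n) (i : Fin n) :
    ∃! p : Fin (n + 1) × Fin k, T.1 p.1 p.2 = some i.succ :=
  T.2.2 _ i.succ_ne_zero

noncomputable def parent (T : IncKTree k n) (i : Fin n) : Fin (n + 1) × Fin k :=
  (T.existsUnique_parent i).choose

theorem child_parent (T : IncKTree k n) (i : Fin n) :
    T.1 (T.parent i).1 (T.parent i).2 = some i.succ :=
  (T.existsUnique_parent i).choose_spec.1

theorem child_eq_some_succ_iff (T : IncKTree k n) (i : Fin n) (p : Fin (n + 1) × Fin k) :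
    T.1 p.1 p.2 = some i.succ ↔ p = T.parent i :=
  ⟨fun h => (T.existsUnique_parent i).unique h (T.child_parent i),
    fun h => h ▸ T.child_parent i⟩

theorem parent_injective (T : IncKTree k n) : Injective T.parent := fun i i' h =>
  Fin.succ_injective _ <| Option.some_injective _ <|
    (T.child_parent i).symm.trans (h ▸ T.child_parent i')

noncomputable def toParentMap (T : IncKTree k n) : IncParentMap k n :=
  ⟨T.parent, T.parent_injective, fun i => T.2.1 _ _ _ (T.child_parent i)⟩

end IncKTree

namespace IncParentMap

noncomputable def child (p : IncParentMap k n) (u : Fin (n + 1)) (j : Fin k) :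
    Option (Fin (n + 1)) :=
  (partialInv p.1 (u, j)).map Fin.succ

theorem child_eq_some_iff (p : IncParentMap k n) {u v : Fin (n + 1)} {j : Fin k} :
    p.child u j = some v ↔ ∃ i, p.1 i = (u, j) ∧ i.succ = v := by
  simp only [child, Option.map_eq_some_iff]
  exact exists_congr fun i => and_congr_left' (p.2.1.isPartialInv i _)

noncomputable def toIncKTree (p : IncParentMap k n) : IncKTree k n := by
  refine ⟨p.child, fun u j v h => ?_, fun v hv => ?_⟩
  · obtain ⟨i, hi, rfl⟩ := p.child_eq_some_iff.1 h
    simpa only [hi] using p.2.2 i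
  · obtain ⟨i, rfl⟩ := Fin.exists_succ_eq.2 hv
    refine ⟨p.1 i, p.child_eq_some_iff.2 ⟨i, rfl, rfl⟩, fun q hq => ?_⟩
    obtain ⟨i', hi', hii'⟩ := p.child_eq_some_iff.1 hq
    rw [← Fin.succ_injective _ hii', hi']

end IncParentMap

noncomputable def IncKTree.equivParentMap : IncKTree k n ≃ IncParentMap k n where
  toFun := IncKTree.toParentMap
  invFun := IncParentMap.toIncKTree
  left_inv T := Subtype.ext <| funext₂ fun u j => Option.ext fun v => by
    change T.toParentMap.child u j = some v ↔ T.1 u j = some v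
    rw [IncParentMap.child_eq_some_iff]
    constructor
    · rintro ⟨i, hi, rfl⟩
      exact (T.child_eq_some_succ_iff i (u, j)).2 hi.symm
    · intro h
      have hv : v ≠ 0 := Fin.pos_iff_ne_zero.1 ((Fin.zero_le u).trans_lt (T.2.1 _ _ _ h))
      obtain ⟨i, rfl⟩ := Fin.exists_succ_eq.2 hv
      exact ⟨i, ((T.child_eq_some_succ_iff i (u, j)).1 h).symm, rfl⟩
  right_inv p := Subtype.ext <| funext fun i =>
    ((p.toIncKTree.child_eq_some_succ_iff i (p.1 i)).1
      (p.child_eq_some_iff.2 ⟨i, rfl, rfl⟩)).symm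

namespace RookPlacementK

def slot (R : RookPlacementK k n) (i : Fin n) : Fin (n + 1) × Fin k :=
  have hk : 0 < k := Nat.pos_of_ne_zero fun hk => by simpa [hk] using R.2.2 i
  (⟨R.1 i / k, by have := Nat.div_lt_of_lt_mul (R.2.2 i); omega⟩, ⟨R.1 i % k, Nat.mod_lt _ hk⟩)

theorem slot_eq_iff (R : RookPlacementK k n) {i : Fin n} {u : Fin (n + 1)} {j : Fin k} :
    R.slot i = (u, j) ↔ (R.1 i : ℕ) = k * u + j := by
  rw [← div_mod_eq_iff_eq_mul_add j.isLt, Prod.ext_iff, Fin.ext_iff, Fin.ext_iff]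
  rfl

theorem slot_lt (R : RookPlacementK k n) (i : Fin n) : (R.slot i).1 < i.succ :=
  Fin.lt_def.2 (Nat.div_lt_of_lt_mul (R.2.2 i))

theorem slot_injective (R : RookPlacementK k n) : Injective R.slot := fun _ _ h =>
  R.2.1 <| Fin.ext <| (R.slot_eq_iff.1 rfl).trans (R.slot_eq_iff.1 h.symm).symm

def toParentMap (R : RookPlacementK k n) : IncParentMap k n :=
  ⟨R.slot, R.slot_injective, R.slot_lt⟩

end RookPlacementK

def IncParentMap.toRookPlacement (p : IncParentMap k n) : RookPlacementK k n := by
  have hrow (i : Fin n) : k * (p.1 i).1 + (p.1 i).2 < k * (i + 1) :=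
    mul_add_lt_mul (p.1 i).2.isLt (p.2.2 i)
  refine ⟨fun i => ⟨k * (p.1 i).1 + (p.1 i).2, ?_⟩, fun i i' h => p.2.1 ?_, hrow⟩
  · exact (hrow i).trans_le (Nat.mul_le_mul_left k i.isLt)
  · obtain ⟨hu, hj⟩ := (mul_add_inj (p.1 i).2.isLt (p.1 i').2.isLt).1 (Fin.mk.inj_iff.1 h)
    exact Prod.ext (Fin.ext hu) (Fin.ext hj)

def RookPlacementK.equivParentMap : RookPlacementK k n ≃ IncParentMap k n where
  toFun := RookPlacementK.toParentMap
  invFun := IncParentMap.toRookPlacement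
  left_inv R := Subtype.ext <| funext fun i => Fin.ext (Nat.div_add_mod (R.1 i) k)
  right_inv _ := Subtype.ext <| funext fun _ => (RookPlacementK.slot_eq_iff _).2 rfl

theorem rook_placements_k_staircase_equiv_k_ary_trees_general (k n : ℕ) :
    (∃ e : RookPlacementK k n ≃ IncKTree k n,
      ∀ (R : RookPlacementK k n) (u v : Fin (n + 1)) (j : Fin k),
        (e R).1 u j = some v ↔
          ∃ i : Fin n, (R.1 i : ℕ) = k * u.val + j.val ∧ v.val = i.val + 1) ∧
    Nat.card (RookPlacementK k n) = Nat.card (IncKTree k n) := by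
  let e : RookPlacementK k n ≃ IncKTree k n :=
    RookPlacementK.equivParentMap.trans IncKTree.equivParentMap.symm
  refine ⟨⟨e, fun R u v j => ?_⟩, Nat.card_congr e⟩
  change R.toParentMap.child u j = some v ↔ _
  rw [IncParentMap.child_eq_some_iff]
  refine exists_congr fun i => and_congr R.slot_eq_iff ?_
  rw [eq_comm, Fin.ext_iff, Fin.val_succ]

/-- For any `k ≥ 1`, the map sending a rook placement `R` on the `k`-tuple
staircase `kδ_n` to the labelled tree with root `1` and, for each `j < k`,
vertex `v+1` as the `j`-th child of vertex `u` whenever the `j`-th column of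
block `u` of `R` has a rook in row `v`, is a bijection between rook placements
on `kδ_n` and increasing `k`-ary trees on `n+1` vertices; in particular the
two sets are equinumerous. -/
theorem rook_placements_k_staircase_equiv_k_ary_trees (k n : ℕ) (hk : 1 ≤ k) :
    (∃ e : RookPlacementK k n ≃ IncKTree k n,
      ∀ (R : RookPlacementK k n) (u v : Fin (n + 1)) (j : Fin k),
        (e R).1 u j = some v ↔
          ∃ i : Fin n, (R.1 i : ℕ) = k * u.val + j.val ∧ v.val = i.val + 1) ∧
    Nat.card (RookPlacementK k n) = Nat.card (IncKTree k n) :=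
  rook_placements_k_staircase_equiv_k_ary_trees_general k n
end
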